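/- arXiv:math/0004055 — 5 statements merged into one kernel-verified Lean document; each statement's English description precedes it below -/
import Mathlib

section
/- For any integer k ≥ 1, p_k(X/(1-tX)) = ∑_{μ, |μ|≥k} t^{|μ|-k} C(|μ|, k) (-1)^{|μ|-ℓ(μ)} · k·(ℓ(μ)-1)! / ∏_i m_i(μ)! · e_μ(X), where the sum is over all partitions μ with |μ| ≥ k. -/
/-- `⟨μ choose k⟩`: the number of `k`-element subsets of the Ferrers diagram of `μ`
containing at least one cell in each row. -/
def genBinom (μ : Multiset ℕ) (k : ℕ) : ℕ :=
  let l := μ.sort (· ≤ ·)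
  ((Finset.univ : Finset (Finset ((i : Fin l.length) × Fin (l.get i)))).filter
    (fun s => s.card = k ∧ ∀ i : Fin l.length, ∃ c ∈ s, c.1 = i)).card

/-- `z_μ = ∏ᵢ i^{mᵢ(μ)} mᵢ(μ)!`. -/
def zPart {n : ℕ} (μ : n.Partition) : ℚ :=
  (μ.parts.map (fun i => (i : ℚ))).prod *
    ∏ i ∈ μ.parts.toFinset, (Nat.factorial (μ.parts.count i) : ℚ)

/-- Elementary symmetric polynomial `e_j` evaluated at a finite family. -/
def esymmVal {N : ℕ} {R : Type*} [CommRing R] (x : Fin N → R) (j : ℕ) : R :=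
  ∑ s ∈ Finset.univ.powersetCard j, ∏ r ∈ s, x r

/-!
Newton's identity `p_n = (-1)^(n+1) n e_n - ∑_{0<i<n} (-1)^i e_i p_(n-i)`, unrolled by
strong induction, writes `p_n` as `∑_{μ ⊢ n} c_μ e_μ`. Prefixing a part `i` to a partition of
`n - i` is a bijection onto partitions of `n` with at least two parts and a marked part value, so
the weights must satisfy `c_μ = ∑_i (-1)^(i+1) c_(μ - i)` over the distinct parts `i` of `μ`; the
weight `c_μ = (-1)^(n+ℓ) n (ℓ-1)! / ∏ m_i!` does, because `∑_i m_i (n - i) = n (ℓ - 1)`.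
The `t^m`-coefficient of `(x / (1 - t x))^k` is `C(m+k-1, k-1) x^(m+k)`, and
`C(m+k-1, k-1) (m+k) = C(m+k, k) k` turns `C(m+k-1, k-1) c_μ` into the stated coefficient.
-/

open Finset

def newtonCoeff (s : Multiset ℕ) : ℚ :=
  (-1) ^ (s.sum + Multiset.card s) * (s.sum * Nat.factorial (Multiset.card s - 1)) /
    ∏ i ∈ s.toFinset, (Nat.factorial (s.count i) : ℚ)

lemma newtonCoeff_singleton (n : ℕ) : newtonCoeff {n} = (-1) ^ (n + 1) * n := by
  simp [newtonCoeff]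

lemma prod_factorial_count_eq_count_mul_erase (s : Multiset ℕ) {i : ℕ} (hi : i ∈ s) :
    ∏ j ∈ s.toFinset, (Nat.factorial (s.count j) : ℚ) =
      s.count i * ∏ j ∈ (s.erase i).toFinset, (Nat.factorial ((s.erase i).count j) : ℚ) := by
  have hsub : (s.erase i).toFinset ⊆ s.toFinset := fun j hj =>
    Multiset.mem_toFinset.2 (Multiset.mem_of_mem_erase (Multiset.mem_toFinset.1 hj))
  have hextend : ∏ j ∈ (s.erase i).toFinset, (Nat.factorial ((s.erase i).count j) : ℚ) =
      ∏ j ∈ s.toFinset, (Nat.factorial ((s.erase i).count j) : ℚ) :=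
    prod_subset hsub fun j _ hj => by
      rw [Multiset.count_eq_zero.2 (by simpa using hj), Nat.factorial_zero, Nat.cast_one]
  have hmem : i ∈ s.toFinset := Multiset.mem_toFinset.2 hi
  rw [hextend, ← mul_prod_erase _ _ hmem, ← mul_prod_erase _ _ hmem, ← mul_assoc]
  congr 1
  · rw [Multiset.count_erase_self, ← Nat.cast_mul, Nat.mul_factorial_pred]
    exact (Multiset.count_pos.2 hi).ne'
  · exact prod_congr rfl fun j hj => by rw [Multiset.count_erase_of_ne (ne_of_mem_erase hj)]

lemma sum_toFinset_sub_mul_count (s : Multiset ℕ) :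
    ∑ i ∈ s.toFinset, ((s.sum : ℚ) - i) * s.count i = s.sum * (Multiset.card s - 1) := by
  have hcard : ∑ i ∈ s.toFinset, (s.count i : ℚ) = Multiset.card s := by
    exact_mod_cast Multiset.toFinset_sum_count_eq s
  have hsum : ∑ i ∈ s.toFinset, (i : ℚ) * s.count i = s.sum := by
    rw [Finset.sum_multiset_count s]
    push_cast
    simp [mul_comm]
  simp only [sub_mul, sum_sub_distrib, ← mul_sum, hcard, hsum]
  ring

lemma sum_neg_one_pow_mul_newtonCoeff_erase (s : Multiset ℕ) (hs : 1 < Multiset.card s) :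
    ∑ i ∈ s.toFinset, (-1) ^ (i + 1) * newtonCoeff (s.erase i) = newtonCoeff s := by
  set D := ∏ j ∈ s.toFinset, (Nat.factorial (s.count j) : ℚ) with hD_def
  set A : ℚ := (-1) ^ (s.sum + Multiset.card s) * Nat.factorial (Multiset.card s - 2) / D
  have hterm : ∀ i ∈ s.toFinset,
      (-1) ^ (i + 1) * newtonCoeff (s.erase i) = A * ((s.sum - i) * s.count i) := by
    intro i hi
    rw [Multiset.mem_toFinset] at hi
    have hcount : (s.count i : ℚ) ≠ 0 := by exact_mod_cast (Multiset.count_pos.2 hi).ne'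
    have hD : ∏ j ∈ (s.erase i).toFinset, (Nat.factorial ((s.erase i).count j) : ℚ) =
        D / s.count i := by
      rw [hD_def, prod_factorial_count_eq_count_mul_erase s hi, mul_div_cancel_left₀ _ hcount]
    have hsum : ((s.erase i).sum : ℚ) = s.sum - i := by
      rw [← Multiset.sum_erase hi, Nat.cast_add]
      ring
    have hcard := Multiset.card_erase_add_one hi
    have hsign : (-1 : ℚ) ^ (i + 1) * (-1) ^ ((s.erase i).sum + Multiset.card (s.erase i)) =
        (-1) ^ (s.sum + Multiset.card s) := by
      have := Multiset.sum_erase hi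
      rw [← pow_add]
      congr 1
      omega
    rw [newtonCoeff, hD, hsum, show Multiset.card (s.erase i) - 1 = Multiset.card s - 2 by omega]
    simp only [A, ← hsign]
    field_simp
  have hfact : (Nat.factorial (Multiset.card s - 1) : ℚ) =
      (Multiset.card s - 1) * Nat.factorial (Multiset.card s - 2) := by
    rw [show Multiset.card s - 1 = Multiset.card s - 2 + 1 by omega, Nat.factorial_succ]
    push_cast [Nat.cast_sub hs.le, Nat.cast_sub (show 2 ≤ Multiset.card s by omega)]
    ring
  rw [sum_congr rfl hterm, ← mul_sum, sum_toFinset_sub_mul_count, newtonCoeff, hfact]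
  ring

lemma sum_neg_one_pow_mul_newtonCoeff_erase_mul_prod {A : Type*} [CommRing A] [Algebra ℚ A]
    (f : ℕ → A) (s : Multiset ℕ) (hs : 1 < Multiset.card s) :
    ∑ i ∈ s.toFinset, (-1) ^ (i + 1) * f i *
        (algebraMap ℚ A (newtonCoeff (s.erase i)) * ((s.erase i).map f).prod) =
      algebraMap ℚ A (newtonCoeff s) * (s.map f).prod := by
  rw [← sum_neg_one_pow_mul_newtonCoeff_erase s hs, map_sum, sum_mul]
  refine sum_congr rfl fun i hi => ?_
  rw [← Multiset.prod_map_erase (Multiset.mem_toFinset.1 hi), map_mul, map_pow, map_neg, map_one]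
  ring

-- Partitions as bare multisets, so that the cons/erase bijection below carries no proof terms.
def partitionsFinset (n : ℕ) : Finset (Multiset ℕ) :=
  (univ : Finset n.Partition).map ⟨Nat.Partition.parts, fun _ _ => Nat.Partition.ext⟩

lemma mem_partitionsFinset {n : ℕ} {s : Multiset ℕ} :
    s ∈ partitionsFinset n ↔ (∀ i ∈ s, 0 < i) ∧ s.sum = n := by
  simp only [partitionsFinset, mem_map, mem_univ, true_and]
  constructor
  · rintro ⟨μ, rfl⟩
    exact ⟨fun _ => μ.parts_pos, μ.parts_sum⟩
  · rintro ⟨hpos, hsum⟩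
    exact ⟨⟨s, hpos _, hsum⟩, rfl⟩

lemma sum_partition_eq_sum_partitionsFinset {M : Type*} [AddCommMonoid M] (n : ℕ)
    (f : Multiset ℕ → M) : ∑ μ : n.Partition, f μ.parts = ∑ s ∈ partitionsFinset n, f s := by
  rw [partitionsFinset, sum_map]
  rfl

lemma sum_antidiagonal_sum_partitionsFinset {M : Type*} [AddCommMonoid M] (n : ℕ)
    (g : ℕ → Multiset ℕ → M) :
    ∑ a ∈ antidiagonal n with a.1 ∈ Set.Ioo 0 n, ∑ t ∈ partitionsFinset a.2, g a.1 t =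
      ∑ s ∈ partitionsFinset n with 1 < Multiset.card s, ∑ i ∈ s.toFinset, g i (s.erase i) := by
  rw [sum_sigma', sum_sigma']
  refine sum_nbij' (fun x => ⟨x.1.1 ::ₘ x.2, x.1.1⟩) (fun y => ⟨(y.2, n - y.2), y.1.erase y.2⟩)
    ?_ ?_ ?_ ?_ ?_
  · rintro ⟨⟨i, j⟩, t⟩ hx
    simp only [mem_sigma, mem_filter, HasAntidiagonal.mem_antidiagonal, Set.mem_Ioo,
      mem_partitionsFinset] at hx ⊢
    obtain ⟨⟨rfl, hi, hij⟩, hpos, rfl⟩ := hx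
    have ht : t ≠ 0 := by rintro rfl; simp at hij
    refine ⟨⟨⟨Multiset.forall_mem_cons.2 ⟨hi, hpos⟩, Multiset.sum_cons _ _⟩, ?_⟩, by simp⟩
    simpa using Multiset.card_pos.2 ht
  · rintro ⟨s, i⟩ hy
    simp only [mem_sigma, mem_filter, HasAntidiagonal.mem_antidiagonal, Set.mem_Ioo,
      mem_partitionsFinset, Multiset.mem_toFinset] at hy ⊢
    obtain ⟨⟨⟨hpos, rfl⟩, hcard⟩, hi⟩ := hy
    have hsum := Multiset.sum_erase hi
    have hne : s.erase i ≠ 0 := by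
      have := Multiset.card_erase_add_one hi; rw [← Multiset.card_pos]; omega
    obtain ⟨a, ha⟩ := Multiset.exists_mem_of_ne_zero hne
    have := Multiset.le_sum_of_mem ha
    have := hpos a (Multiset.mem_of_mem_erase ha)
    exact ⟨⟨by omega, hpos i hi, by omega⟩, fun a ha => hpos a (Multiset.mem_of_mem_erase ha),
      by omega⟩
  · rintro ⟨⟨i, j⟩, t⟩ hx
    simp only [mem_sigma, mem_filter, HasAntidiagonal.mem_antidiagonal] at hx
    simp only [Multiset.erase_cons_head, ← hx.1.1, add_tsub_cancel_left]
  · rintro ⟨s, i⟩ hy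
    simp only [mem_sigma, Multiset.mem_toFinset] at hy
    simp only [Multiset.cons_erase hy.2]
  · rintro ⟨⟨i, j⟩, t⟩ -
    simp only [Multiset.erase_cons_head]

lemma filter_card_le_one_partitionsFinset {n : ℕ} (hn : 0 < n) :
    {s ∈ partitionsFinset n | ¬1 < Multiset.card s} = {{n}} := by
  ext s
  simp only [mem_filter, mem_partitionsFinset, mem_singleton, not_lt]
  constructor
  · rintro ⟨⟨-, rfl⟩, hcard⟩
    obtain hcard | hcard := Nat.le_one_iff_eq_zero_or_eq_one.1 hcard
    · simp [Multiset.card_eq_zero.1 hcard] at hn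
    · obtain ⟨a, rfl⟩ := Multiset.card_eq_one.1 hcard
      simp
  · rintro rfl
    simpa using hn

open MvPolynomial in
theorem psum_eq_sum_partitionsFinset (σ R : Type*) [Fintype σ] [CommRing R] [Algebra ℚ R]
    (n : ℕ) (hn : 0 < n) :
    psum σ R n = ∑ s ∈ partitionsFinset n,
      algebraMap ℚ (MvPolynomial σ R) (newtonCoeff s) * (s.map (esymm σ R)).prod := by
  induction n using Nat.strong_induction_on with
  | _ n ih =>
  have hmultipart : ∑ a ∈ antidiagonal n with a.1 ∈ Set.Ioo 0 n,
      (-1) ^ a.1 * esymm σ R a.1 * psum σ R a.2 =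
        -∑ s ∈ partitionsFinset n with 1 < Multiset.card s,
          algebraMap ℚ _ (newtonCoeff s) * (s.map (esymm σ R)).prod := by
    rw [← sum_congr rfl fun s hs =>
        sum_neg_one_pow_mul_newtonCoeff_erase_mul_prod (esymm σ R) s (mem_filter.1 hs).2,
      ← sum_antidiagonal_sum_partitionsFinset n fun i t => (-1) ^ (i + 1) * esymm σ R i *
        (algebraMap ℚ _ (newtonCoeff t) * (t.map (esymm σ R)).prod), ← sum_neg_distrib]
    refine sum_congr rfl fun a ha => ?_
    rw [mem_filter, HasAntidiagonal.mem_antidiagonal, Set.mem_Ioo] at ha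
    rw [ih a.2 (by omega) (by omega), mul_sum, ← sum_neg_distrib]
    refine sum_congr rfl fun t _ => ?_
    ring
  have honepart : ∑ s ∈ partitionsFinset n with ¬1 < Multiset.card s,
      algebraMap ℚ (MvPolynomial σ R) (newtonCoeff s) * (s.map (esymm σ R)).prod =
        (-1) ^ (n + 1) * n * esymm σ R n := by
    rw [filter_card_le_one_partitionsFinset hn, sum_singleton, newtonCoeff_singleton]
    simp
  rw [psum_eq_mul_esymm_sub_sum σ R n hn, hmultipart, ← honepart, sub_neg_eq_add, add_comm,
    sum_filter_add_sum_filter_not]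

lemma eval_esymm {N : ℕ} {R : Type*} [CommRing R] (x : Fin N → R) (j : ℕ) :
    MvPolynomial.eval x (MvPolynomial.esymm (Fin N) R j) = esymmVal x j := by
  simp [MvPolynomial.esymm, esymmVal]

lemma sum_pow_eq_sum_partition_esymmVal {N : ℕ} {R : Type*} [CommRing R] [Algebra ℚ R]
    (x : Fin N → R) (n : ℕ) (hn : 0 < n) :
    ∑ r, x r ^ n = ∑ μ : n.Partition,
      algebraMap ℚ R (newtonCoeff μ.parts) * (μ.parts.map (esymmVal x)).prod := by
  have h := congrArg (MvPolynomial.eval x) (psum_eq_sum_partitionsFinset (Fin N) R n hn)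
  simp only [MvPolynomial.psum, map_sum, map_mul, map_pow, MvPolynomial.eval_X,
    RingHom.map_rat_algebraMap, map_multiset_prod, Multiset.map_map, Function.comp_def,
    eval_esymm] at h
  exact h.trans (sum_partition_eq_sum_partitionsFinset n _).symm

open PowerSeries in
lemma coeff_pow_mk_pow_succ {R : Type*} [CommRing R] (y : R) (k m : ℕ) :
    coeff m ((mk fun j => y ^ (j + 1)) ^ (k + 1)) = (m + k).choose k * y ^ (m + k + 1) := by
  have hgeom : (mk fun j => y ^ (j + 1)) = C y * rescale y (mk 1) := by
    ext j
    simp [coeff_C_mul, coeff_rescale, pow_succ']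
  rw [hgeom, mul_pow, ← map_pow, ← map_pow, mk_one_pow_eq_mk_choose_add, coeff_C_mul,
    coeff_rescale, coeff_mk, add_comm k m]
  ring

/-- For `k ≥ 1`,
`p_k(X/(1-tX)) = ∑_{|μ|≥k} t^{|μ|-k} C(|μ|,k) (-1)^{|μ|-ℓ(μ)} k(ℓ(μ)-1)!/∏ᵢ mᵢ(μ)! · e_μ(X)`:
the coefficient of `t^m` collects the partitions `μ` of `m + k`. -/
theorem powerSum_shifted_eq_esymm_expansion {R : Type*} [CommRing R] [Algebra ℚ R]
    (N : ℕ) (x : Fin N → R) (k : ℕ) (hk : 1 ≤ k) :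
    (∑ r : Fin N, (PowerSeries.mk fun m => x r ^ (m + 1)) ^ k) =
      PowerSeries.mk fun m =>
        ∑ μ : Nat.Partition (m + k),
          algebraMap ℚ R (((m + k).choose k : ℚ) * (-1) ^ ((m + k) + Multiset.card μ.parts) *
              (k * Nat.factorial (Multiset.card μ.parts - 1)) /
              ∏ i ∈ μ.parts.toFinset, (Nat.factorial (μ.parts.count i) : ℚ)) *
            (μ.parts.map (fun p => esymmVal x p)).prod := by
  obtain ⟨k, rfl⟩ := Nat.exists_eq_add_of_le' hk
  ext m
  simp_rw [map_sum, PowerSeries.coeff_mk, coeff_pow_mk_pow_succ]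
  rw [← mul_sum, sum_pow_eq_sum_partition_esymmVal x _ (by omega), mul_sum]
  refine sum_congr rfl fun μ _ => ?_
  rw [← mul_assoc, ← map_natCast (algebraMap ℚ R), ← map_mul]
  congr 2
  have hchoose : ((m + k).choose k : ℚ) * (m + k + 1) =
      (m + (k + 1)).choose (k + 1) * (k + 1) := by
    exact_mod_cast (mul_comm _ _).trans (Nat.add_one_mul_choose_eq (m + k) k)
  rw [newtonCoeff, μ.parts_sum]
  push_cast
  linear_combination (-1 : ℚ) ^ (m + (k + 1) + Multiset.card μ.parts) *
    (Multiset.card μ.parts - 1).factorial /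
      (∏ i ∈ μ.parts.toFinset, ((μ.parts.count i).factorial : ℚ)) * hchoose
end

section
/- For any integer k ≥ 1, p_k(X/(1-tX)) = ∑_{μ, |μ|≥k} t^{|μ|-k} C(|μ|, k) (-1)^{ℓ(μ)-1} · k·(ℓ(μ)-1)! / ∏_i m_i(μ)! · h_μ(X), where the sum is over all partitions μ with |μ| ≥ k. -/
/-- Complete homogeneous symmetric polynomial `h_j` evaluated at a finite family. -/
def hsymmVal {N : ℕ} {R : Type*} [CommRing R] (x : Fin N → R) (j : ℕ) : R :=
  ∑ m : Sym (Fin N) j, (m.1.map x).prod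

/-!
Write `p_n = ∑_r x_r ^ n`. Coefficientwise, `(∑_m x^(m+1) t^m)^k` is
`∑_m C(m+k-1, k-1) x^(m+k) t^m`, and `C(m+k, k) k = (m+k) C(m+k-1, k-1)`, so the theorem is the
expansion `p_n = ∑_{μ ⊢ n} c_μ h_μ` with `c_μ = (-1)^(ℓ-1) n (ℓ-1)! / ∏ m_i!`.

Since `h_0 = 1`, a sequence `f` is determined by Newton's recursion
`∑_{j=1}^n f_j h_(n-j) = n h_n`. The power sums satisfy it because
`n h_n = ∑_{deg M = n} ∑_r m_r(M) x^M`, and the pairs `(r, j ≤ m_r(M))` are the factorizations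
`x^M = x_r^j x^M'` with `deg M' = n - j`. For the expansion, `h_μ h_a = h_ν` with `ν = μ + {a}`,
so the recursion becomes `c_ν + ∑_{a ∈ ν} c_(ν - a) = [ν = (n)] n`; for `ℓ(ν) ≥ 2` the common
denominator reduces this to `∑_a m_a (n - a) = (ℓ - 1) n`.
-/

open Finset

theorem PowerSeries.mk_pow_succ_pow_eq_mk_choose {R : Type*} [CommRing R] (y : R) (k : ℕ) :
    (mk fun m => y ^ (m + 1)) ^ (k + 1) =
      mk fun m => ((m + k).choose k : R) * y ^ (m + k + 1) := by
  have h : (mk fun m => y ^ (m + 1) : PowerSeries R) = C y * rescale y (mk 1) := by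
    ext m; simp [coeff_rescale, pow_succ, mul_comm]
  rw [h, mul_pow, ← map_pow, ← map_pow, mk_one_pow_eq_mk_choose_add, rescale_mk]
  ext m
  rw [coeff_C_mul, coeff_mk, coeff_mk, add_comm k m]
  ring

theorem sum_Icc_one_mul_sub_reflect {R : Type*} [Semiring R] (f g : ℕ → R) (hf : f 0 = 0)
    (n : ℕ) :
    ∑ j ∈ Icc 1 n, f j * g (n - j) = f n * g 0 + ∑ a ∈ Icc 1 n, f (n - a) * g a := by
  have split (F : ℕ → R) : ∑ i ∈ range (n + 1), F i = F 0 + ∑ i ∈ Icc 1 n, F i := by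
    rw [Nat.range_succ_eq_Icc_zero, ← insert_Icc_add_one_left_eq_Icc n.zero_le,
      sum_insert (by simp), zero_add]
  have h := (Nat.sum_antidiagonal_eq_sum_range_succ (fun i j => f i * g j) n).symm.trans
    ((Nat.sum_antidiagonal_swap (f := fun ij => f ij.1 * g ij.2)).symm.trans
      (Nat.sum_antidiagonal_eq_sum_range_succ (fun i j => f j * g i) n))
  rw [split, split] at h
  simpa [hf] using h

theorem eq_of_sum_Icc_mul_sub_eq {R : Type*} [Ring R] {f g h : ℕ → R} (h0 : h 0 = 1)
    (hfg : ∀ n, 0 < n → ∑ j ∈ Icc 1 n, f j * h (n - j) = ∑ j ∈ Icc 1 n, g j * h (n - j))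
    {n : ℕ} (hn : 0 < n) : f n = g n := by
  induction n using Nat.strong_induction_on with
  | _ n ih =>
    obtain ⟨m, rfl⟩ : ∃ m, n = m + 1 := ⟨n - 1, by omega⟩
    have hlower : ∑ j ∈ Icc 1 m, f j * h (m + 1 - j) = ∑ j ∈ Icc 1 m, g j * h (m + 1 - j) :=
      sum_congr rfl fun j hj => by
        rw [mem_Icc] at hj
        rw [ih j (by omega) hj.1]
    simpa [sum_Icc_succ_top, hlower, h0] using hfg (m + 1) hn

section NewtonIdentity

variable {R : Type*} [CommRing R] {N : ℕ} (x : Fin N → R)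

theorem hsymmVal_zero : hsymmVal x 0 = 1 := by
  simp [hsymmVal, Sym.eq_nil_of_card_zero]

theorem pow_mul_hsymmVal_sub (r : Fin N) {j n : ℕ} (hjn : j ≤ n) :
    x r ^ j * hsymmVal x (n - j) =
      ∑ M : Sym (Fin N) n with j ≤ M.1.count r, (M.1.map x).prod := by
  rw [hsymmVal, mul_sum]
  refine sum_bij' (fun m _ => ⟨Multiset.replicate j r + m.1, by simp [hjn]⟩)
    (fun M hM => ⟨M.1 - Multiset.replicate j r, by
      rw [Multiset.card_sub (Multiset.le_count_iff_replicate_le.1 (mem_filter.1 hM).2)]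
      simp⟩)
    (fun _ _ => mem_filter.2 ⟨mem_univ _, by simp⟩) (fun _ _ => mem_univ _) ?_ ?_ ?_
  · intro m _
    exact Sym.coe_injective (add_tsub_cancel_left _ _)
  · intro M hM
    exact Sym.coe_injective
      (add_tsub_cancel_of_le (Multiset.le_count_iff_replicate_le.1 (mem_filter.1 hM).2))
  · intro m _
    simp [Multiset.prod_replicate]

theorem sum_powerSum_mul_hsymmVal_sub (n : ℕ) :
    ∑ j ∈ Icc 1 n, (∑ r, x r ^ j) * hsymmVal x (n - j) = n • hsymmVal x n := by
  have hcount (M : Sym (Fin N) n) (r : Fin N) :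
      #{j ∈ Icc 1 n | j ≤ M.1.count r} = M.1.count r := by
    have hle := M.2 ▸ Multiset.count_le_card r M.1
    rw [show {j ∈ Icc 1 n | j ≤ M.1.count r} = Icc 1 (M.1.count r) by
      ext j; simp only [mem_filter, mem_Icc]; omega]
    simp
  calc ∑ j ∈ Icc 1 n, (∑ r, x r ^ j) * hsymmVal x (n - j)
      = ∑ j ∈ Icc 1 n, ∑ r, ∑ M : Sym (Fin N) n,
          if j ≤ M.1.count r then (M.1.map x).prod else 0 := by
        refine sum_congr rfl fun j hj => ?_
        rw [sum_mul]
        refine sum_congr rfl fun r _ => ?_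
        rw [pow_mul_hsymmVal_sub x r (mem_Icc.1 hj).2, sum_filter]
    _ = ∑ M : Sym (Fin N) n, ∑ r, ∑ j ∈ Icc 1 n,
          if j ≤ M.1.count r then (M.1.map x).prod else 0 := by
        rw [sum_comm]
        exact (sum_congr rfl fun r _ => sum_comm).trans sum_comm
    _ = ∑ M : Sym (Fin N) n, ∑ r, M.1.count r • (M.1.map x).prod := by
        simp_rw [← sum_filter, sum_const, hcount]
    _ = ∑ M : Sym (Fin N) n, n • (M.1.map x).prod := sum_congr rfl fun M _ => by
        rw [← sum_smul, Multiset.sum_count_eq_card fun a _ => mem_univ a, M.2]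
    _ = n • hsymmVal x n := by rw [hsymmVal, smul_sum]

end NewtonIdentity

theorem Multiset.count_mul_prod_factorial_count_erase {α : Type*} [DecidableEq α]
    {P : Multiset α} {a : α} (ha : a ∈ P) :
    P.count a * ∏ i ∈ (P.erase a).toFinset, ((P.erase a).count i).factorial =
      ∏ i ∈ P.toFinset, (P.count i).factorial := by
  have hmem := mem_toFinset.2 ha
  rw [prod_subset (toFinset_subset.2 (erase_subset a P))
      fun i _ hi => by rw [count_eq_zero.2 (by simpa using hi), Nat.factorial_zero],
    ← mul_prod_erase _ _ hmem, ← mul_prod_erase _ _ hmem, ← mul_assoc, count_erase_self,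
    Nat.mul_factorial_pred (count_pos.2 ha).ne']
  congr 1
  exact prod_congr rfl fun i hi => by rw [count_erase_of_ne (ne_of_mem_erase hi)]

theorem Nat.Partition.two_le_card_parts_of_ne_indiscrete {n : ℕ} (hn : n ≠ 0) {ν : n.Partition}
    (hν : ν ≠ indiscrete n) : 2 ≤ Multiset.card ν.parts := by
  by_contra! hlt
  obtain h | h : Multiset.card ν.parts = 0 ∨ Multiset.card ν.parts = 1 := by omega
  · exact hn (by simpa [Multiset.card_eq_zero.1 h] using ν.parts_sum.symm)
  · obtain ⟨b, hb⟩ := Multiset.card_eq_one.1 h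
    have hbn : b = n := by simpa [hb] using ν.parts_sum
    exact hν (Nat.Partition.ext (by rw [hb, hbn, indiscrete_parts hn]))

theorem Nat.Partition.sum_Icc_sum_cons {M : Type*} [AddCommMonoid M] (n : ℕ)
    (F : ℕ → Multiset ℕ → M) :
    ∑ a ∈ Icc 1 n, ∑ μ : (n - a).Partition, F a (a ::ₘ μ.parts) =
      ∑ ν : n.Partition, ∑ a ∈ ν.parts.toFinset, F a ν.parts := by
  calc _ = ∑ a ∈ Icc 1 n, ∑ ν : n.Partition with a ∈ ν.parts, F a ν.parts :=
        sum_congr rfl fun a ha => by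
          obtain ⟨h1, h2⟩ := mem_Icc.1 ha
          exact ((Nat.Partition.partitionWithPartEquiv h1 h2).symm.sum_comp
            fun ν => F a ν.1.parts).trans
              (sum_subtype _ (mem_filter_univ ·) fun ν : n.Partition => F a ν.parts).symm
    _ = _ := sum_comm' fun a ν => by
          simp only [mem_Icc, mem_filter, mem_univ, true_and, and_true, Multiset.mem_toFinset]
          exact ⟨fun h => h.2, fun h => ⟨⟨ν.parts_pos h, ν.le_of_mem_parts h⟩, h⟩⟩

/-- The coefficient `c_μ` of `h_μ` in `p_{|μ|}`. -/
noncomputable def powerSumCoeff (P : Multiset ℕ) : ℚ :=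
  (-1) ^ (Multiset.card P - 1) * (P.sum * (Multiset.card P - 1).factorial) /
    ∏ i ∈ P.toFinset, ((P.count i).factorial : ℚ)

theorem powerSumCoeff_zero : powerSumCoeff 0 = 0 := by simp [powerSumCoeff]

theorem powerSumCoeff_singleton (a : ℕ) : powerSumCoeff {a} = a := by simp [powerSumCoeff]

theorem powerSumCoeff_erase {P : Multiset ℕ} {a c : ℕ} (ha : a ∈ P)
    (hP : Multiset.card P = c + 2) :
    powerSumCoeff (P.erase a) = (-1) ^ c * c.factorial * (P.count a * ((P.sum : ℚ) - a)) /
      ∏ i ∈ P.toFinset, ((P.count i).factorial : ℚ) := by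
  have hsum : ((P.erase a).sum : ℚ) = P.sum - a := by
    rw [← Multiset.cons_erase ha, Multiset.sum_cons, Multiset.erase_cons_head]; push_cast; ring
  have hcount : (P.count a : ℚ) ≠ 0 := by exact_mod_cast (Multiset.count_pos.2 ha).ne'
  have hprod : ∏ i ∈ P.toFinset, ((P.count i).factorial : ℚ) =
      P.count a * ∏ i ∈ (P.erase a).toFinset, (((P.erase a).count i).factorial : ℚ) := by
    exact_mod_cast (Multiset.count_mul_prod_factorial_count_erase ha).symm
  have hcard : Multiset.card (P.erase a) - 1 = c := by
    rw [Multiset.card_erase_of_mem ha, hP]; rfl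
  rw [powerSumCoeff, hcard, hsum, hprod]
  field_simp

theorem sum_powerSumCoeff_erase {P : Multiset ℕ} (hP : 2 ≤ Multiset.card P) :
    ∑ a ∈ P.toFinset, powerSumCoeff (P.erase a) = -powerSumCoeff P := by
  obtain ⟨c, hc⟩ : ∃ c, Multiset.card P = c + 2 := ⟨Multiset.card P - 2, by omega⟩
  have hsum : ∑ a ∈ P.toFinset, (P.count a : ℚ) * ((P.sum : ℚ) - a) = (c + 1) * P.sum := by
    have := Finset.sum_multiset_map_count P (fun a : ℕ => (P.sum : ℚ) - a)
    simp only [nsmul_eq_mul] at this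
    rw [← this, Multiset.sum_map_sub, Multiset.map_const', Multiset.sum_replicate, hc,
      Nat.cast_multiset_sum]
    ring
  rw [sum_congr rfl fun a ha => powerSumCoeff_erase (Multiset.mem_toFinset.1 ha) hc,
    ← sum_div, ← mul_sum, hsum, powerSumCoeff, hc, show c + 2 - 1 = c + 1 from rfl,
    Nat.factorial_succ]
  push_cast
  ring

theorem powerSumCoeff_add_sum_erase {n : ℕ} (hn : n ≠ 0) (ν : n.Partition) :
    powerSumCoeff ν.parts + ∑ a ∈ ν.parts.toFinset, powerSumCoeff (ν.parts.erase a) =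
      if ν = .indiscrete n then (n : ℚ) else 0 := by
  split_ifs with h
  · simp [h, Nat.Partition.indiscrete_parts hn, powerSumCoeff_singleton, powerSumCoeff_zero]
  · rw [sum_powerSumCoeff_erase (ν.two_le_card_parts_of_ne_indiscrete hn h), add_neg_cancel]

theorem choose_mul_powerSumCoeff {P : Multiset ℕ} {m k : ℕ} (hP : P.sum = m + k + 1) :
    ((m + k).choose k : ℚ) * powerSumCoeff P =
      (m + k + 1).choose (k + 1) * (-1) ^ (Multiset.card P - 1) *
        ((k + 1 : ℕ) * (Multiset.card P - 1).factorial) /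
          ∏ i ∈ P.toFinset, ((P.count i).factorial : ℚ) := by
  have hchoose : ((m + k + 1 : ℕ) : ℚ) * (m + k).choose k =
      (m + k + 1).choose (k + 1) * (k + 1) := by
    exact_mod_cast Nat.add_one_mul_choose_eq (m + k) k
  rw [powerSumCoeff, hP]
  push_cast at hchoose ⊢
  linear_combination ((-1 : ℚ) ^ (Multiset.card P - 1) * (Multiset.card P - 1).factorial /
    ∏ i ∈ P.toFinset, ((P.count i).factorial : ℚ)) * hchoose

section Expansion

variable {R : Type*} [CommRing R] [Algebra ℚ R] {N : ℕ} (x : Fin N → R)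

noncomputable def hsymmExpansion (n : ℕ) : R :=
  ∑ μ : n.Partition, algebraMap ℚ R (powerSumCoeff μ.parts) * (μ.parts.map (hsymmVal x)).prod

theorem hsymmExpansion_zero : hsymmExpansion x 0 = 0 := by
  simp [hsymmExpansion, powerSumCoeff_zero]

theorem sum_hsymmExpansion_mul_hsymmVal_sub {n : ℕ} (hn : n ≠ 0) :
    ∑ j ∈ Icc 1 n, hsymmExpansion x j * hsymmVal x (n - j) = n • hsymmVal x n := by
  calc _ = hsymmExpansion x n + ∑ a ∈ Icc 1 n, hsymmExpansion x (n - a) * hsymmVal x a := by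
        rw [sum_Icc_one_mul_sub_reflect _ _ (hsymmExpansion_zero x), hsymmVal_zero, mul_one]
    _ = ∑ ν : n.Partition, algebraMap ℚ R (powerSumCoeff ν.parts +
          ∑ a ∈ ν.parts.toFinset, powerSumCoeff (ν.parts.erase a)) *
            (ν.parts.map (hsymmVal x)).prod := by
        have hcons : ∑ a ∈ Icc 1 n, hsymmExpansion x (n - a) * hsymmVal x a =
            ∑ ν : n.Partition, ∑ a ∈ ν.parts.toFinset, algebraMap ℚ R
              (powerSumCoeff (ν.parts.erase a)) * (ν.parts.map (hsymmVal x)).prod := by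
          rw [← Nat.Partition.sum_Icc_sum_cons n fun a P =>
            algebraMap ℚ R (powerSumCoeff (P.erase a)) * (P.map (hsymmVal x)).prod]
          refine sum_congr rfl fun a _ => ?_
          rw [hsymmExpansion, sum_mul]
          refine sum_congr rfl fun μ _ => ?_
          rw [Multiset.erase_cons_head, Multiset.map_cons, Multiset.prod_cons]
          ring
        rw [hcons, hsymmExpansion, ← sum_add_distrib]
        refine sum_congr rfl fun ν _ => ?_
        rw [map_add, map_sum, add_mul, sum_mul]
    _ = ∑ ν : n.Partition, if ν = .indiscrete n then n • hsymmVal x n else 0 := by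
        refine sum_congr rfl fun ν _ => ?_
        rw [powerSumCoeff_add_sum_erase hn]
        split_ifs with h
        · simp [h, Nat.Partition.indiscrete_parts hn]
        · simp
    _ = n • hsymmVal x n := by simp

theorem powerSum_eq_hsymmExpansion {n : ℕ} (hn : 0 < n) : ∑ r, x r ^ n = hsymmExpansion x n :=
  eq_of_sum_Icc_mul_sub_eq (hsymmVal_zero x) (fun m hm =>
    (sum_powerSum_mul_hsymmVal_sub x m).trans
      (sum_hsymmExpansion_mul_hsymmVal_sub x hm.ne').symm) hn

end Expansion

/-- For `k ≥ 1`,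
`p_k(X/(1-tX)) = ∑_{|μ|≥k} t^{|μ|-k} C(|μ|,k) (-1)^{ℓ(μ)-1} k(ℓ(μ)-1)!/∏ᵢ mᵢ(μ)! · h_μ(X)`:
the coefficient of `t^m` collects the partitions `μ` of `m + k`. -/
theorem powerSum_shifted_eq_hsymm_expansion {R : Type*} [CommRing R] [Algebra ℚ R]
    (N : ℕ) (x : Fin N → R) (k : ℕ) (hk : 1 ≤ k) :
    (∑ r : Fin N, (PowerSeries.mk fun m => x r ^ (m + 1)) ^ k) =
      PowerSeries.mk fun m =>
        ∑ μ : Nat.Partition (m + k),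
          algebraMap ℚ R (((m + k).choose k : ℚ) * (-1) ^ (Multiset.card μ.parts - 1) *
              (k * Nat.factorial (Multiset.card μ.parts - 1)) /
              ∏ i ∈ μ.parts.toFinset, (Nat.factorial (μ.parts.count i) : ℚ)) *
            (μ.parts.map (fun p => hsymmVal x p)).prod := by
  obtain ⟨k, rfl⟩ : ∃ k', k = k' + 1 := ⟨k - 1, by omega⟩
  ext m
  simp_rw [map_sum, PowerSeries.mk_pow_succ_pow_eq_mk_choose, PowerSeries.coeff_mk, ← mul_sum,
    ← add_assoc, powerSum_eq_hsymmExpansion x (Nat.succ_pos (m + k)), hsymmExpansion, mul_sum]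
  refine sum_congr rfl fun μ _ => ?_
  rw [← map_natCast (algebraMap ℚ R), ← mul_assoc, ← map_mul,
    choose_mul_powerSumCoeff μ.parts_sum]
end

section
/- Let z be an indeterminate and X = {x_1,...,x_N}. The coefficient of u^i t^j in F(t,u) = (1+u)^z ∏_r (1 + (u/(1+u)) · t x_r/(1-t x_r)) equals ∑_{μ: ℓ(μ)≤i, |μ|=j} C(z-ℓ(μ), i-ℓ(μ)) m_μ(X), where C(z-l, i-l) is the polynomial binomial coefficient in z. -/
/-!
Expanding the product over `r`, the coefficient of `tʲ` is a sum over exponent vectors `f` with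
`∑ f r = j`, the vector `f` contributing `(u/(1+u))^ℓ xᶠ` with `ℓ` the number of nonzero entries of
`f`. Pascal's rule gives `(1+u)^z (u/(1+u))^ℓ = u^ℓ (1+u)^(z-ℓ)`, so the coefficient of `uⁱ` in
that contribution is `C(z-ℓ, i-ℓ) xᶠ` (zero when `ℓ > i`). Grouping the vectors `f` by their
multiset of nonzero entries, a partition `μ` of `j` of length `ℓ`, produces `m_μ(X)`.
-/

/-- Monomial symmetric polynomial `m_μ` evaluated at a finite family: the sum of all distinct
monomials `∏ x_r^{f r}` whose multiset of nonzero exponents is `μ`. -/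
def mval {ι A : Type*} [Fintype ι] [DecidableEq ι] [CommRing A] (x : ι → A) (μ : Multiset ℕ) : A :=
  ∑ f ∈ (Fintype.piFinset fun _ : ι => Finset.range (μ.sum + 1)).filter
      (fun f => (Finset.univ.val.map f).filter (· ≠ 0) = μ),
    ∏ r, x r ^ f r

/-- Polynomial binomial coefficient `C(a,b) = a(a-1)⋯(a-b+1)/b!` in a ℚ-algebra. -/
def pchoose {A : Type*} [CommRing A] [Algebra ℚ A] (a : A) (b : ℕ) : A :=
  (∏ m ∈ Finset.range b, (a - (m : A))) * algebraMap ℚ A (1 / Nat.factorial b)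

open Finset PowerSeries

section Binomial

variable {A : Type*} [CommRing A] [Algebra ℚ A]

lemma pchoose_zero (a : A) : pchoose a 0 = 1 := by simp [pchoose]

lemma pchoose_succ_succ (z : A) (n : ℕ) :
    pchoose (z + 1) (n + 1) = pchoose z (n + 1) + pchoose z n := by
  have hfac : algebraMap ℚ A (1 / Nat.factorial n) =
      (n + 1 : A) * algebraMap ℚ A (1 / Nat.factorial (n + 1)) := by
    rw [show (n + 1 : A) = algebraMap ℚ A (n + 1) by simp, ← map_mul, Nat.factorial_succ]
    congr 1
    push_cast
    field_simp
  have hprod : ∏ m ∈ range (n + 1), (z + 1 - (m : A)) = (z + 1) * ∏ m ∈ range n, (z - (m : A)) := by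
    rw [prod_range_succ', Nat.cast_zero, sub_zero, mul_comm]
    congr 1
    refine prod_congr rfl fun m _ => ?_
    push_cast
    ring
  rw [pchoose, pchoose, pchoose, hprod, prod_range_succ, hfac]
  ring

noncomputable def pchooseSeries (z : A) : A⟦X⟧ := mk fun n => pchoose z n

variable (A) in
noncomputable def xDivOneAddX : A⟦X⟧ := mk fun m => if m = 0 then 0 else (-1 : A) ^ (m - 1)

omit [Algebra ℚ A] in
lemma xDivOneAddX_mul_one_add_X : xDivOneAddX A * (1 + X) = X := by
  ext (_ | _ | n) <;> simp [xDivOneAddX, mul_add, coeff_succ_mul_X, coeff_X, pow_succ]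

lemma pchooseSeries_mul_one_add_X (z : A) : pchooseSeries z * (1 + X) = pchooseSeries (z + 1) := by
  ext (_ | n) <;> simp [pchooseSeries, mul_add, coeff_succ_mul_X, pchoose_zero, pchoose_succ_succ,
    add_comm]

lemma pchooseSeries_mul_xDivOneAddX (z : A) :
    pchooseSeries z * xDivOneAddX A = X * pchooseSeries (z - 1) := by
  have hunit : IsUnit (1 + X : A⟦X⟧) := by simp [isUnit_iff_constantCoeff]
  refine hunit.mul_right_cancel ?_
  rw [mul_assoc, xDivOneAddX_mul_one_add_X, mul_assoc, pchooseSeries_mul_one_add_X, sub_add_cancel,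
    mul_comm]

lemma pchooseSeries_mul_xDivOneAddX_pow (z : A) (l : ℕ) :
    pchooseSeries z * xDivOneAddX A ^ l = X ^ l * pchooseSeries (z - l) := by
  induction l generalizing z with
  | zero => simp
  | succ l ih =>
    rw [pow_succ', ← mul_assoc, pchooseSeries_mul_xDivOneAddX, mul_assoc, ih, ← mul_assoc,
      ← pow_succ', Nat.cast_succ, sub_sub, add_comm 1]

lemma coeff_pchooseSeries_mul_xDivOneAddX_pow (z : A) (l i : ℕ) :
    coeff i (pchooseSeries z * xDivOneAddX A ^ l) =
      if l ≤ i then pchoose (z - l) (i - l) else 0 := by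
  rw [pchooseSeries_mul_xDivOneAddX_pow, coeff_X_pow_mul']
  simp [pchooseSeries]

end Binomial

section Partitions

variable {ι A : Type*} [Fintype ι]

def nonzeroParts (f : ι → ℕ) : Multiset ℕ := (univ.val.map f).filter (· ≠ 0)

lemma pos_of_mem_nonzeroParts {f : ι → ℕ} {p : ℕ} (hp : p ∈ nonzeroParts f) : 0 < p :=
  Nat.pos_of_ne_zero (Multiset.of_mem_filter (p := (· ≠ 0)) hp)

lemma sum_nonzeroParts (f : ι → ℕ) : (nonzeroParts f).sum = ∑ r, f r := by
  rw [nonzeroParts, Multiset.filter_map]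
  exact sum_filter_ne_zero univ

lemma card_nonzeroParts (f : ι → ℕ) : Multiset.card (nonzeroParts f) = #{r | f r ≠ 0} := by
  rw [nonzeroParts, Multiset.filter_map, Multiset.card_map]
  rfl

variable [DecidableEq ι] [CommRing A]

lemma mval_eq_sum_piAntidiag (x : ι → A) (μ : Multiset ℕ) :
    mval x μ = ∑ f ∈ piAntidiag univ μ.sum with nonzeroParts f = μ, ∏ r, x r ^ f r := by
  refine sum_congr (ext fun f => ?_) fun _ _ => rfl
  simp only [mem_filter, Fintype.mem_piFinset, mem_range, mem_piAntidiag, mem_univ, implies_true,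
    and_true, Nat.lt_succ_iff]
  change _ ∧ nonzeroParts f = μ ↔ _ ∧ nonzeroParts f = μ
  constructor
  · rintro ⟨-, rfl⟩
    exact ⟨(sum_nonzeroParts f).symm, rfl⟩
  · rintro ⟨hsum, rfl⟩
    exact ⟨fun r => hsum ▸ single_le_sum (fun _ _ => Nat.zero_le _) (mem_univ r), rfl⟩

lemma sum_piAntidiag_eq_sum_partition (g : Multiset ℕ → A) (x : ι → A) (j : ℕ) :
    ∑ f ∈ piAntidiag univ j, g (nonzeroParts f) * ∏ r, x r ^ f r =
      ∑ μ : Nat.Partition j, g μ.parts * mval x μ.parts := by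
  have hmaps : ∀ f ∈ piAntidiag (univ : Finset ι) j,
      nonzeroParts f ∈ (univ : Finset (Nat.Partition j)).image Nat.Partition.parts :=
    fun f hf => mem_image.2 ⟨⟨nonzeroParts f, pos_of_mem_nonzeroParts,
      (sum_nonzeroParts f).trans (mem_piAntidiag.1 hf).1⟩, mem_univ _, rfl⟩
  rw [← sum_fiberwise_of_maps_to hmaps, sum_image fun μ _ ν _ => Nat.Partition.ext]
  refine sum_congr rfl fun μ _ => ?_
  rw [mval_eq_sum_piAntidiag, μ.parts_sum, mul_sum]
  exact sum_congr rfl fun f hf => by rw [(mem_filter.1 hf).2]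

end Partitions

section Coefficients

variable {A : Type*} [CommRing A]

lemma coeff_prod_eq_sum_piAntidiag {ι : Type*} [DecidableEq ι] (φ : ι → A⟦X⟧) (d : ℕ)
    (s : Finset ι) : coeff d (∏ r ∈ s, φ r) = ∑ f ∈ piAntidiag s d, ∏ r ∈ s, coeff (f r) (φ r) := by
  rw [coeff_prod, finsuppAntidiag, sum_map, ← sum_attach (piAntidiag s d)]
  rfl

lemma coeff_one_add_C_mul_mk (v : A⟦X⟧) (a : A) (m : ℕ) :
    coeff m (1 + C v * mk fun k => if k = 0 then 0 else C (a ^ k)) =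
      (if m = 0 then 1 else v) * C (a ^ m) := by
  rcases m with _ | m <;> simp [coeff_C_mul, coeff_one]

lemma coeff_prod_one_add_C_mul_mk {ι : Type*} [Fintype ι] [DecidableEq ι] (v : A⟦X⟧) (x : ι → A)
    (j : ℕ) :
    coeff j (∏ r, (1 + C v * mk fun k => if k = 0 then 0 else C (x r ^ k))) =
      ∑ f ∈ piAntidiag univ j, v ^ Multiset.card (nonzeroParts f) * C (∏ r, x r ^ f r) := by
  rw [coeff_prod_eq_sum_piAntidiag]
  refine sum_congr rfl fun f _ => ?_
  simp only [coeff_one_add_C_mul_mk, prod_mul_distrib, prod_ite, prod_const_one, prod_const,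
    one_mul, card_nonzeroParts, map_prod]

end Coefficients

/-- The coefficient of `uⁱ tʲ` in `F(t,u) = (1+u)^z ∏_r (1 + (u/(1+u)) t x_r/(1-t x_r))`
equals `∑_{ℓ(μ)≤i, |μ|=j} C(z-ℓ(μ), i-ℓ(μ)) m_μ(X)`.  Here `F` is a formal power series in the
outer variable `t` whose coefficients are power series in `u`; `(1+u)^z = ∑ᵢ C(z,i) uⁱ`,
`u/(1+u) = ∑_{m≥1} (-1)^{m-1} uᵐ`, `t x_r/(1-t x_r) = ∑_{m≥1} x_rᵐ tᵐ`. -/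
theorem coeff_F_eq_monomial_expansion {A : Type*} [CommRing A] [Algebra ℚ A]
    (z : A) (N : ℕ) (x : Fin N → A) (i j : ℕ) :
    PowerSeries.coeff (R := A) i (PowerSeries.coeff (R := PowerSeries A) j
      (PowerSeries.C (R := PowerSeries A) (PowerSeries.mk fun n => pchoose z n) *
        ∏ r : Fin N,
          (1 + PowerSeries.C (R := PowerSeries A)
                (PowerSeries.mk fun m => if m = 0 then 0 else (-1 : A) ^ (m - 1)) *
              PowerSeries.mk fun m =>
                if m = 0 then 0 else PowerSeries.C (R := A) (x r ^ m)))) =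
      ∑ μ ∈ (Finset.univ : Finset (Nat.Partition j)).filter
          (fun μ => Multiset.card μ.parts ≤ i),
        pchoose (z - (Multiset.card μ.parts : A)) (i - Multiset.card μ.parts) *
          mval x μ.parts := by
  change coeff i (coeff j (C (pchooseSeries z) * ∏ r : Fin N,
    (1 + C (xDivOneAddX A) * mk fun m => if m = 0 then 0 else C (x r ^ m)))) = _
  rw [coeff_C_mul, coeff_prod_one_add_C_mul_mk, mul_sum, map_sum]
  simp_rw [← mul_assoc, coeff_mul_C, coeff_pchooseSeries_mul_xDivOneAddX_pow]
  rw [sum_piAntidiag_eq_sum_partition (fun μ => if Multiset.card μ ≤ i then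
    pchoose (z - Multiset.card μ) (i - Multiset.card μ) else 0), sum_filter]
  simp_rw [ite_mul, zero_mul]
end

section
/- For any indeterminate z, integers i, j ≥ 1, and any partition μ of j, one has ∑_{k=0}^{min(i,j)} C(z-j, i-k) ⟨μ choose k⟩ = ∑_{k=0}^{min(i,j)} (-1)^{k-ℓ(μ)} C(z-k, i-k) ⟨μ choose k⟩, as an identity of polynomials in z. -/
/-!
Let `f` be the row lengths of the diagram, `j = ∑ r, f r`, `ℓ` the number of rows and `c k` the
number of row-covering `k`-sets of cells. Expanding `∏ r, ((b + a) ^ f r - a ^ f r)` row by row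
gives `∑ k, c k * b ^ k * a ^ (j - k)`. For `(a, b) = (1, x)` and `(a, b) = (1 + x, -x)` the two
products differ only by the sign `(-1) ^ ℓ`, so
`∑ k, c k * x ^ k = (-1) ^ ℓ * ∑ k, c k * (-x) ^ k * (1 + x) ^ (j - k)`.
Multiplying by `(1 + x) ^ (N - j)` and comparing coefficients of `x ^ i` gives the identity at every
natural number `z = N ≥ j`; both sides are polynomials in `z`, so it holds identically.
-/

open Finset Polynomial

section pchoose

variable {A B : Type*} [CommRing A] [Algebra ℚ A] [CommRing B] [Algebra ℚ B]

theorem map_pchoose (φ : A →ₐ[ℚ] B) (a : A) (b : ℕ) : φ (pchoose a b) = pchoose (φ a) b := by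
  simp only [pchoose, map_mul, map_prod, map_sub, map_natCast, AlgHom.commutes]

theorem pchoose_natCast (m b : ℕ) : pchoose (m : ℚ) b = m.choose b := by
  rw [pchoose, ← descPochhammer_eval_eq_prod_range, descPochhammer_eval_eq_descFactorial,
    Nat.descFactorial_eq_factorial_mul_choose, Algebra.algebraMap_self, RingHom.id_apply]
  have h_fact : (b.factorial : ℚ) ≠ 0 := by positivity
  push_cast
  field_simp

end pchoose

theorem add_pow_sub_pow_eq_sum_nonempty {R : Type*} [CommRing R] (a b : R) (m : ℕ) :
    (b + a) ^ m - a ^ m = ∑ t : Finset (Fin m) with t.Nonempty, b ^ #t * a ^ (m - #t) := by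
  rw [← Fin.sum_pow_mul_eq_add_pow, ← sum_filter_add_sum_filter_not univ Finset.Nonempty]
  simp [not_nonempty_iff_eq_empty, filter_eq']

theorem range_succ_filter_le (i j : ℕ) : {k ∈ range (j + 1) | k ≤ i} = range (min i j + 1) := by
  ext k
  simp only [mem_filter, mem_range]
  omega

section Covering

variable {ι : Type*} [Fintype ι] [DecidableEq ι] (f : ι → ℕ)

def coveringCount (k : ℕ) : ℕ :=
  #{s : Finset (Σ r, Fin (f r)) | #s = k ∧ ∀ r, ∃ c ∈ s, c.1 = r}

theorem prod_add_pow_sub_pow {R : Type*} [CommRing R] (a b : R) :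
    ∏ r, ((b + a) ^ f r - a ^ f r) =
      ∑ s : Finset (Σ r, Fin (f r)) with ∀ r, ∃ c ∈ s, c.1 = r,
        b ^ #s * a ^ (∑ r, f r - #s) := by
  calc ∏ r, ((b + a) ^ f r - a ^ f r)
      = ∏ r, ∑ t : Finset (Fin (f r)) with t.Nonempty, b ^ #t * a ^ (f r - #t) := by
        simp only [add_pow_sub_pow_eq_sum_nonempty]
    _ = ∑ p ∈ Fintype.piFinset fun r => {t : Finset (Fin (f r)) | t.Nonempty},
          ∏ r, b ^ #(p r) * a ^ (f r - #(p r)) := prod_univ_sum _ _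
    _ = ∑ p ∈ Fintype.piFinset fun r => {t : Finset (Fin (f r)) | t.Nonempty},
          b ^ #(univ.sigma p) * a ^ (∑ r, f r - #(univ.sigma p)) := by
        refine sum_congr rfl fun p _ => ?_
        rw [prod_mul_distrib, prod_pow_eq_pow_sum, prod_pow_eq_pow_sum, card_sigma,
          sum_tsub_distrib _ fun r _ => by simpa using card_le_univ (p r)]
    _ = _ := by
        refine sum_nbij' (fun p => univ.sigma p)
          (fun (s : Finset (Σ r, Fin (f r))) r =>
            s.preimage (Sigma.mk (β := fun r => Fin (f r)) r) sigma_mk_injective.injOn)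
          ?_ ?_ ?_ ?_ fun _ _ => rfl
        · intro p hp
          simp only [Fintype.mem_piFinset, mem_filter, mem_univ, true_and] at hp ⊢
          intro r
          obtain ⟨x, hx⟩ := hp r
          exact ⟨⟨r, x⟩, mem_sigma.2 ⟨mem_univ r, hx⟩, rfl⟩
        · intro s hs
          simp only [Fintype.mem_piFinset, mem_filter, mem_univ, true_and] at hs ⊢
          intro r
          obtain ⟨⟨r, x⟩, hx, rfl⟩ := hs r
          exact ⟨x, mem_preimage.2 hx⟩
        · intro p _
          ext r x
          simp
        · intro s _
          ext ⟨r, x⟩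
          simp

theorem prod_add_pow_sub_pow_eq_sum_coveringCount {R : Type*} [CommRing R] (a b : R) :
    ∏ r, ((b + a) ^ f r - a ^ f r) =
      ∑ k ∈ range (∑ r, f r + 1), coveringCount f k * b ^ k * a ^ (∑ r, f r - k) := by
  rw [prod_add_pow_sub_pow, ← sum_fiberwise_of_maps_to (g := card) (t := range (∑ r, f r + 1))]
  · refine sum_congr rfl fun k _ => ?_
    rw [filter_filter, sum_congr rfl fun s hs => by rw [(mem_filter.1 hs).2.2], sum_const,
      nsmul_eq_mul, mul_assoc, coveringCount]
    simp only [and_comm]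
  · intro s _
    rw [mem_range, Nat.lt_succ_iff]
    simpa using card_le_univ s

theorem sum_coveringCount_mul_pow {R : Type*} [CommRing R] (x : R) :
    ∑ k ∈ range (∑ r, f r + 1), coveringCount f k * x ^ k =
      (-1) ^ Fintype.card ι * ∑ k ∈ range (∑ r, f r + 1),
        coveringCount f k * (-x) ^ k * (1 + x) ^ (∑ r, f r - k) := by
  have h₁ := prod_add_pow_sub_pow_eq_sum_coveringCount f 1 x
  have h₂ := prod_add_pow_sub_pow_eq_sum_coveringCount f (1 + x) (-x)
  simp only [one_pow, mul_one] at h₁ h₂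
  have h_neg (r : ι) : (-x + (1 + x)) ^ f r - (1 + x) ^ f r = -((x + 1) ^ f r - 1) := by ring
  rw [← h₁, ← h₂, prod_congr rfl fun r _ => h_neg r, prod_neg, card_univ, ← mul_assoc, ← pow_add,
    Even.neg_one_pow ⟨_, rfl⟩, one_mul]

theorem sum_coveringCount_mul_pow_mul_one_add_pow {R : Type*} [CommRing R] (x : R) {N : ℕ}
    (hN : ∑ r, f r ≤ N) :
    ∑ k ∈ range (∑ r, f r + 1), coveringCount f k * x ^ k * (1 + x) ^ (N - ∑ r, f r) =
      ∑ k ∈ range (∑ r, f r + 1),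
        (-1) ^ (k + Fintype.card ι) * coveringCount f k * x ^ k * (1 + x) ^ (N - k) := by
  rw [← sum_mul, sum_coveringCount_mul_pow, mul_sum, sum_mul]
  refine sum_congr rfl fun k hk => ?_
  have hk : N - k = (∑ r, f r - k) + (N - ∑ r, f r) := by
    rw [mem_range] at hk
    omega
  rw [hk, pow_add, neg_pow, pow_add]
  ring

theorem sum_choose_mul_coveringCount {N : ℕ} (hN : ∑ r, f r ≤ N) (i : ℕ) :
    ∑ k ∈ range (min i (∑ r, f r) + 1),
        ((N - ∑ r, f r).choose (i - k) : ℚ) * coveringCount f k =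
      ∑ k ∈ range (min i (∑ r, f r) + 1),
        (-1) ^ (k + Fintype.card ι) * ((N - k).choose (i - k) : ℚ) * coveringCount f k := by
  have h := congrArg (coeff · i) (sum_coveringCount_mul_pow_mul_one_add_pow f (X : ℚ[X]) hN)
  have h_sign (e : ℕ) : (-1 : ℚ[X]) ^ e = C ((-1) ^ e) := by simp
  simp only [finsetSum_coeff, mul_assoc, h_sign, coeff_C_mul, coeff_natCast_mul,
    coeff_X_pow_mul', coeff_one_add_X_pow, mul_ite, mul_zero, ← sum_filter, range_succ_filter_le] at h
  convert h using 2 with k <;> ring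

theorem sum_pchoose_mul_coveringCount {A : Type*} [CommRing A] [Algebra ℚ A] (z : A) (i : ℕ) :
    ∑ k ∈ range (min i (∑ r, f r) + 1),
        pchoose (z - ((∑ r, f r : ℕ) : A)) (i - k) * coveringCount f k =
      ∑ k ∈ range (min i (∑ r, f r) + 1),
        (-1) ^ (k + Fintype.card ι) * pchoose (z - k) (i - k) * coveringCount f k := by
  suffices h : ∑ k ∈ range (min i (∑ r, f r) + 1),
        pchoose (X - ((∑ r, f r : ℕ) : ℚ[X])) (i - k) * (coveringCount f k : ℚ[X]) =
      ∑ k ∈ range (min i (∑ r, f r) + 1),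
        (-1 : ℚ[X]) ^ (k + Fintype.card ι) * pchoose (X - (k : ℚ[X])) (i - k) * coveringCount f k by
    simpa [map_pchoose] using congrArg (aeval z) h
  refine eq_of_infinite_eval_eq _ _ <| Set.Infinite.mono ?_
    ((Set.Ici_infinite (∑ r, f r)).image Nat.cast_injective.injOn)
  rintro _ ⟨N, hN, rfl⟩
  have h_eval (p : ℚ[X]) (b : ℕ) : eval (N : ℚ) (pchoose p b) = pchoose (eval (N : ℚ) p) b :=
    map_pchoose (aeval (N : ℚ)) p b
  simp only [Set.mem_ofPred_eq, eval_finsetSum, eval_mul, h_eval, eval_sub, eval_X, eval_natCast,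
    eval_pow, eval_neg, eval_one]
  rw [Set.mem_Ici] at hN
  convert sum_choose_mul_coveringCount f hN i using 2 with k hk k hk
  · rw [← Nat.cast_sub hN, pchoose_natCast]
  · rw [mem_range] at hk
    rw [← Nat.cast_sub (by omega), pchoose_natCast]

end Covering

theorem genBinom_eq_coveringCount (m : Multiset ℕ) (k : ℕ) :
    genBinom m k = coveringCount (m.sort (· ≤ ·)).get k := by
  unfold genBinom coveringCount
  dsimp only
  -- the two filters may differ in their `Decidable` instances
  congr

theorem pchoose_genBinom_symmetry_general {A : Type*} [CommRing A] [Algebra ℚ A] (z : A)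
    (i j : ℕ) (μ : Nat.Partition j) :
    (∑ k ∈ Finset.range (min i j + 1),
      pchoose (z - (j : A)) (i - k) * (genBinom μ.parts k : A)) =
      ∑ k ∈ Finset.range (min i j + 1),
        (-1 : A) ^ (k + Multiset.card μ.parts) *
          pchoose (z - (k : A)) (i - k) * (genBinom μ.parts k : A) := by
  have h_sum : ∑ r, (μ.parts.sort (· ≤ ·)).get r = j := by
    simp only [List.get_eq_getElem]
    rw [Fin.sum_univ_getElem, ← Multiset.sum_coe, Multiset.sort_eq, μ.parts_sum]
  have h_card : Fintype.card (Fin (μ.parts.sort (· ≤ ·)).length) = Multiset.card μ.parts := by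
    simp
  simpa only [h_sum, h_card, genBinom_eq_coveringCount] using
    sum_pchoose_mul_coveringCount (μ.parts.sort (· ≤ ·)).get z i

/-- For `i, j ≥ 1` and any partition `μ` of `j`:
`∑_{k=0}^{min(i,j)} C(z-j, i-k) ⟨μ choose k⟩
  = ∑_{k=0}^{min(i,j)} (-1)^{k-ℓ(μ)} C(z-k, i-k) ⟨μ choose k⟩`
as an identity of polynomials in `z` (the sign is written `(-1)^{k+ℓ(μ)}`). -/
theorem pchoose_genBinom_symmetry {A : Type*} [CommRing A] [Algebra ℚ A] (z : A)
    (i j : ℕ) (hi : 1 ≤ i) (hj : 1 ≤ j) (μ : Nat.Partition j) :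
    (∑ k ∈ Finset.range (min i j + 1),
      pchoose (z - (j : A)) (i - k) * (genBinom μ.parts k : A)) =
      ∑ k ∈ Finset.range (min i j + 1),
        (-1 : A) ^ (k + Multiset.card μ.parts) *
          pchoose (z - (k : A)) (i - k) * (genBinom μ.parts k : A) :=
  pchoose_genBinom_symmetry_general z i j μ
end

section
/- Let λ be a partition, α a positive rational parameter, and set Z = {j-1-(i-1)/α : (i,j) ∈ λ} (a multiset of size |λ|). Define (x)_λ = ∏_{(i,j)∈λ} (x + j - 1 - (i-1)/α). Then for independent indeterminates x and y, (y-x)_λ/(y)_λ = ∑_{i=0}^{|λ|} ∑_{j≥0} (-1)^{i+j} (x^i/y^{i+j}) ∑_{μ: ℓ(μ)≤i, |μ|=j} C(|λ|-ℓ(μ), i-ℓ(μ)) m_μ(Z), as an identity of formal Laurent series in 1/y with polynomial coefficients in x. -/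
/-- The rows of the Ferrers diagram of `lam`, in decreasing order. -/
def rows {n : ℕ} (lam : Nat.Partition n) : List ℕ := (lam.parts.sort (· ≤ ·)).reverse

/-- The cells of the Ferrers diagram of `lam`: `⟨i, j⟩` is the cell in (0-based) row `i`
and column `j`. -/
abbrev Cell {n : ℕ} (lam : Nat.Partition n) := (i : Fin (rows lam).length) × Fin ((rows lam).get i)

/-- The content `j - 1 - (i-1)/α` (with 1-based coordinates) of a cell of `lam`. -/
def content {n : ℕ} (lam : Nat.Partition n) (α : ℚ) (c : Cell lam) : ℚ :=
  (c.2 : ℚ) - (c.1 : ℚ) / α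

/-!
Substituting `w ↦ -w`, the factor of a cell with content `z` becomes `1 + x w ∑ₖ zᵏ wᵏ`, so the
product expands over sets `S` of cells as `∑_S x^|S| w^|S| ∏_{c ∈ S} (1 - z_c w)⁻¹`, and the
`wʲ`-coefficient of the last product is the complete homogeneous polynomial `h_j(z_S)`.
Summing `h_j(z_S)` over the `i`-sets `S` counts each monomial `z^f` once for every `i`-set
containing the support of `f`, that is `C(|λ| - ℓ, i - ℓ)` times when the support has `ℓ`
elements; grouping the monomials by the partition formed by their nonzero exponents gives `m_μ`.
-/

open Finset

namespace Finset

variable {ι : Type*} [DecidableEq ι]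

lemma sum_finsuppAntidiag_eq_sum_piAntidiag {μ M : Type*} [AddCommMonoid μ] [HasAntidiagonal μ]
    [DecidableEq μ] [AddCommMonoid M] (s : Finset ι) (n : μ) (g : (ι → μ) → M) :
    ∑ l ∈ s.finsuppAntidiag n, g l = ∑ f ∈ s.piAntidiag n, g f := by
  rw [finsuppAntidiag, sum_map, ← sum_attach (s.piAntidiag n)]
  rfl

lemma card_filter_powersetCard_subset_eq_ite (s t : Finset ι) (n : ℕ) (hst : s ⊆ t) :
    #((t.powersetCard n).filter (s ⊆ ·)) = if #s ≤ n then (#t - #s).choose (n - #s) else 0 := by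
  split_ifs with hsn
  · exact card_filter_powersetCard_subset s t n hst hsn
  · refine card_eq_zero.2 (filter_eq_empty_iff.2 fun u hu hsu => hsn ?_)
    exact (mem_powersetCard.1 hu).2 ▸ card_le_card hsu

lemma mem_piAntidiag_iff_mem_piAntidiag_univ [Fintype ι] {μ : Type*} [AddCommMonoid μ]
    [HasAntidiagonal μ] [DecidableEq μ] {s : Finset ι} {j : μ} {f : ι → μ} :
    f ∈ s.piAntidiag j ↔ f ∈ univ.piAntidiag j ∧ univ.filter (f · ≠ 0) ⊆ s := by
  simp only [mem_piAntidiag, mem_univ, implies_true, and_true, subset_iff, mem_filter, true_and]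
  have hsum (hsupp : ∀ c, f c ≠ 0 → c ∈ s) : ∑ c ∈ s, f c = ∑ c, f c :=
    sum_subset (subset_univ s) fun c _ hc => by_contra fun h => hc (hsupp c h)
  exact ⟨fun ⟨h, hsupp⟩ => ⟨(hsum hsupp).symm.trans h, hsupp⟩,
    fun ⟨h, hsupp⟩ => ⟨(hsum hsupp).trans h, hsupp⟩⟩

end Finset

section NonzeroValues

variable {ι : Type*} [Fintype ι]

lemma sum_filter_map_ne_zero {M : Type*} [AddCommMonoid M] [DecidableEq M] (f : ι → M) :
    ((univ.val.map f).filter (· ≠ 0)).sum = ∑ c, f c := by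
  rw [Multiset.filter_map]
  exact sum_filter_ne_zero univ

lemma card_filter_map_ne_zero {M : Type*} [Zero M] [DecidableEq M] (f : ι → M) :
    Multiset.card ((univ.val.map f).filter (· ≠ 0)) = #(univ.filter (f · ≠ 0)) := by
  rw [Multiset.filter_map, Multiset.card_map]
  rfl

end NonzeroValues

def completeHomogeneous {ι A : Type*} [DecidableEq ι] [CommSemiring A] (z : ι → A)
    (s : Finset ι) (j : ℕ) : A :=
  ∑ f ∈ s.piAntidiag j, ∏ c ∈ s, z c ^ f c

section Symmetric

variable {ι A : Type*} [Fintype ι] [DecidableEq ι] [CommRing A]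

lemma mval_map {B : Type*} [CommRing B] (φ : A →+* B) (z : ι → A) (μ : Multiset ℕ) :
    φ (mval z μ) = mval (φ ∘ z) μ := by
  simp only [mval, map_sum, map_prod, map_pow, Function.comp_apply]

lemma sum_partition_mul_mval (z : ι → A) (g : Multiset ℕ → A) (j : ℕ) :
    ∑ μ : Nat.Partition j, g μ.parts * mval z μ.parts =
      ∑ f ∈ univ.piAntidiag j, g ((univ.val.map f).filter (· ≠ 0)) * ∏ c, z c ^ f c := by
  let parts : (ι → ℕ) → Multiset ℕ := fun f => (univ.val.map f).filter (· ≠ 0)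
  have hfiber (μ : Nat.Partition j) :
      (Fintype.piFinset fun _ => range (μ.parts.sum + 1)).filter (parts · = μ.parts) =
        (univ.piAntidiag j).filter (parts · = μ.parts) := by
    ext f
    simp only [mem_filter, Fintype.mem_piFinset, mem_range, mem_piAntidiag, mem_univ,
      implies_true, and_true, μ.parts_sum, and_congr_left_iff]
    intro hf
    have hsum : ∑ c, f c = j := by
      rw [← sum_filter_map_ne_zero, ← μ.parts_sum]
      exact congrArg _ hf
    refine ⟨fun _ => hsum, fun _ c => Nat.lt_succ_of_le ?_⟩
    exact hsum ▸ single_le_sum (fun _ _ => Nat.zero_le _) (mem_univ c)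
  have hmaps : ∀ f ∈ univ.piAntidiag j,
      parts f ∈ (univ : Finset (Nat.Partition j)).image Nat.Partition.parts := fun f hf =>
    mem_image.2 ⟨Nat.Partition.ofSums j _ (mem_piAntidiag.1 hf).1, mem_univ _, rfl⟩
  calc ∑ μ : Nat.Partition j, g μ.parts * mval z μ.parts
      = ∑ μ : Nat.Partition j, ∑ f ∈ (univ.piAntidiag j).filter (parts · = μ.parts),
          g (parts f) * ∏ c, z c ^ f c := by
        refine sum_congr rfl fun μ _ => ?_
        rw [mval, hfiber, mul_sum]
        exact sum_congr rfl fun f hf => by rw [(mem_filter.1 hf).2]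
    _ = ∑ ν ∈ (univ : Finset (Nat.Partition j)).image Nat.Partition.parts,
          ∑ f ∈ (univ.piAntidiag j).filter (parts · = ν), g (parts f) * ∏ c, z c ^ f c := by
        rw [sum_image fun μ _ ν _ h => Nat.Partition.ext h]
    _ = _ := sum_fiberwise_of_maps_to hmaps _

lemma sum_powersetCard_completeHomogeneous (z : ι → A) (i j : ℕ) :
    ∑ s ∈ univ.powersetCard i, completeHomogeneous z s j =
      ∑ μ ∈ (univ : Finset (Nat.Partition j)).filter (fun μ => Multiset.card μ.parts ≤ i),
        ((Fintype.card ι - Multiset.card μ.parts).choose (i - Multiset.card μ.parts) : A) *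
          mval z μ.parts := by
  let g : Multiset ℕ → A := fun ν =>
    if Multiset.card ν ≤ i then ((Fintype.card ι - Multiset.card ν).choose
      (i - Multiset.card ν) : A) else 0
  have hprod (s : Finset ι) (f : ι → ℕ) (hf : f ∈ s.piAntidiag j) :
      ∏ c ∈ s, z c ^ f c = ∏ c, z c ^ f c :=
    prod_subset (subset_univ s) fun c _ hc => by
      rw [by_contra fun h => hc ((mem_piAntidiag.1 hf).2 c h), pow_zero]
  calc ∑ s ∈ univ.powersetCard i, completeHomogeneous z s j
      = ∑ s ∈ univ.powersetCard i, ∑ f ∈ s.piAntidiag j, ∏ c, z c ^ f c :=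
        sum_congr rfl fun s _ => sum_congr rfl (hprod s)
    _ = ∑ f ∈ univ.piAntidiag j, ∑ _s ∈ (univ.powersetCard i).filter
          (univ.filter (f · ≠ 0) ⊆ ·), ∏ c, z c ^ f c :=
        sum_comm' fun s f => by rw [mem_piAntidiag_iff_mem_piAntidiag_univ, mem_filter]; tauto
    _ = ∑ f ∈ univ.piAntidiag j, g ((univ.val.map f).filter (· ≠ 0)) * ∏ c, z c ^ f c := by
        refine sum_congr rfl fun f _ => ?_
        rw [sum_const, nsmul_eq_mul, card_filter_powersetCard_subset_eq_ite _ _ _ (subset_univ _),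
          card_univ]
        simp only [g, card_filter_map_ne_zero, Nat.cast_ite, Nat.cast_zero]
    _ = ∑ μ : Nat.Partition j, g μ.parts * mval z μ.parts := (sum_partition_mul_mval z g j).symm
    _ = _ := by
        rw [sum_filter]
        exact sum_congr rfl fun μ _ => by simp only [g, ite_mul, zero_mul]

end Symmetric

namespace PowerSeries

variable {ι A : Type*}

lemma coeff_prod_mk_pow [DecidableEq ι] [CommSemiring A] (z : ι → A) (s : Finset ι) (j : ℕ) :
    coeff j (∏ c ∈ s, mk fun k => z c ^ k) = completeHomogeneous z s j := by
  rw [coeff_prod]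
  simp only [coeff_mk]
  exact sum_finsuppAntidiag_eq_sum_piAntidiag s j fun f => ∏ c ∈ s, z c ^ f c

lemma coeff_prod_one_add_C_mul_X_mul [CommSemiring A] (x : A) (H : ι → A⟦X⟧) (s : Finset ι)
    (m : ℕ) :
    coeff m (∏ c ∈ s, (1 + C x * X * H c)) =
      ∑ i ∈ range (min #s m + 1), x ^ i * ∑ t ∈ s.powersetCard i, coeff (m - i) (∏ c ∈ t, H c) := by
  have hterm (t : Finset ι) :
      ∏ c ∈ t, C x * X * H c = C (x ^ #t) * (X ^ #t * ∏ c ∈ t, H c) := by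
    rw [prod_mul_distrib, prod_mul_distrib, prod_const, prod_const, map_pow, mul_assoc]
  have hrange : (range (#s + 1)).filter (· ≤ m) = range (min #s m + 1) := by
    ext i
    simp only [mem_filter, mem_range]
    omega
  calc coeff m (∏ c ∈ s, (1 + C x * X * H c))
      = ∑ i ∈ range (#s + 1), ∑ t ∈ s.powersetCard i,
          coeff m (C (x ^ i) * (X ^ i * ∏ c ∈ t, H c)) := by
        rw [prod_one_add, map_sum, sum_powerset]
        refine sum_congr rfl fun i _ => sum_congr rfl fun t ht => ?_
        rw [hterm, (mem_powersetCard.1 ht).2]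
    _ = ∑ i ∈ (range (#s + 1)).filter (· ≤ m),
          x ^ i * ∑ t ∈ s.powersetCard i, coeff (m - i) (∏ c ∈ t, H c) := by
        rw [sum_filter]
        refine sum_congr rfl fun i _ => ?_
        simp only [coeff_C_mul, coeff_X_pow_mul']
        split_ifs <;> simp [mul_sum]
    _ = _ := by rw [hrange]

theorem prod_one_add_C_mul_X_mul_mk_pow [Fintype ι] [DecidableEq ι] [CommRing A] (x : A)
    (z : ι → A) :
    ∏ c, (1 + C x * X * mk fun k => z c ^ k) =
      mk fun m => ∑ i ∈ range (min (Fintype.card ι) m + 1), x ^ i *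
        ∑ μ ∈ (univ : Finset (Nat.Partition (m - i))).filter (fun μ => Multiset.card μ.parts ≤ i),
          ((Fintype.card ι - Multiset.card μ.parts).choose (i - Multiset.card μ.parts) : A) *
            mval z μ.parts := by
  ext m
  rw [coeff_prod_one_add_C_mul_X_mul, card_univ, coeff_mk]
  simp only [coeff_prod_mk_pow, sum_powersetCard_completeHomogeneous]

lemma mk_neg_pow_mul_eq_rescale [CommRing A] (a x : A) :
    (mk fun m => if m = 0 then 1 else -(-a) ^ (m - 1) * x) =
      rescale (-1) (1 + C x * X * mk fun k => a ^ k) := by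
  ext (_ | m)
  · simp
  · rw [coeff_rescale, coeff_mk, map_add, mul_assoc, coeff_C_mul, coeff_succ_X_mul, coeff_mk,
      coeff_one, if_neg m.succ_ne_zero, if_neg m.succ_ne_zero, Nat.add_sub_cancel, neg_pow a]
    ring

end PowerSeries

lemma card_cell {n : ℕ} (lam : Nat.Partition n) : Fintype.card (Cell lam) = n := by
  rw [Fintype.card_sigma]
  simp only [Fintype.card_fin, List.get_eq_getElem]
  rw [Fin.sum_univ_getElem, rows, List.sum_reverse, ← Multiset.sum_coe, Multiset.sort_eq,
    lam.parts_sum]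

theorem content_ratio_monomial_expansion_general (n : ℕ) (lam : Nat.Partition n) (α : ℚ) :
    (∏ c : Cell lam,
      (PowerSeries.mk fun m =>
        if m = 0 then (1 : Polynomial ℚ)
        else Polynomial.C (-(-(content lam α c)) ^ (m - 1)) * Polynomial.X)) =
      PowerSeries.mk fun m =>
        (-1 : Polynomial ℚ) ^ m *
          ∑ i ∈ Finset.range (min n m + 1),
            Polynomial.X ^ i *
              Polynomial.C
                (∑ μ ∈ (Finset.univ : Finset (Nat.Partition (m - i))).filter
                    (fun μ => Multiset.card μ.parts ≤ i),
                  (((n - Multiset.card μ.parts).choose (i - Multiset.card μ.parts) : ℕ) : ℚ) *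
                    mval (content lam α) μ.parts) := by
  have hfactor (c : Cell lam) :
      (PowerSeries.mk fun m => if m = 0 then (1 : Polynomial ℚ)
        else Polynomial.C (-(-(content lam α c)) ^ (m - 1)) * Polynomial.X) =
      PowerSeries.rescale (-1) (1 + PowerSeries.C Polynomial.X * PowerSeries.X *
        PowerSeries.mk fun k => Polynomial.C (content lam α c) ^ k) := by
    rw [← PowerSeries.mk_neg_pow_mul_eq_rescale]
    simp only [map_neg, map_pow]
  rw [prod_congr rfl fun c _ => hfactor c, ← map_prod,
    PowerSeries.prod_one_add_C_mul_X_mul_mk_pow, PowerSeries.rescale_mk, card_cell]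
  simp only [map_sum, map_mul, map_natCast, mval_map]
  rfl

/-- Let `lam` be a partition of `n`, `α > 0` rational and `Z` the multiset of contents of `lam`.
Then `(y-x)_λ/(y)_λ = ∑_{i=0}^{|λ|} ∑_{j≥0} (-1)^{i+j} (xⁱ/y^{i+j})
∑_{ℓ(μ)≤i, |μ|=j} C(|λ|-ℓ(μ), i-ℓ(μ)) m_μ(Z)`, as formal Laurent series in `w = 1/y` with
coefficients polynomial in `x`: the left side is `∏_{z∈Z} (1 - (x/y)/(1+z/y))`, each factor
expanded as `1 - ∑_{m≥1} (-(-z))^{m-1} x wᵐ`, and the `wᵐ`-coefficient on the right collects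
the pairs `(i, j)` with `i + j = m`. -/
theorem content_ratio_monomial_expansion (n : ℕ) (lam : Nat.Partition n) (α : ℚ) (hα : 0 < α) :
    (∏ c : Cell lam,
      (PowerSeries.mk fun m =>
        if m = 0 then (1 : Polynomial ℚ)
        else Polynomial.C (-(-(content lam α c)) ^ (m - 1)) * Polynomial.X)) =
      PowerSeries.mk fun m =>
        (-1 : Polynomial ℚ) ^ m *
          ∑ i ∈ Finset.range (min n m + 1),
            Polynomial.X ^ i *
              Polynomial.C
                (∑ μ ∈ (Finset.univ : Finset (Nat.Partition (m - i))).filter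
                    (fun μ => Multiset.card μ.parts ≤ i),
                  (((n - Multiset.card μ.parts).choose (i - Multiset.card μ.parts) : ℕ) : ℚ) *
                    mval (content lam α) μ.parts) :=
  content_ratio_monomial_expansion_general n lam α
end
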